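/- arXiv:2604.13310 — 2 statements merged into one kernel-verified Lean document; each statement's English description precedes it below -/
import Mathlib

section
/- Let N > 0 and f : ZMod N → ℚ. If f̂(k) = 0 for some k ∈ ZMod N, then f̂(u·k) = 0 for every unit u of ZMod N. In other words, the Fourier transform of a rational-valued function on ZMod N vanishes on all or none of the elements generating the same cyclic subgroup. -/
open Finset Real Complex

/-- The discrete Fourier transform of a rational-valued `f : ZMod N → ℚ` at frequency `k`. -/
noncomputable def dft (N : ℕ) [NeZero N] (f : ZMod N → ℚ) (k : ZMod N) : ℂ :=
  ∑ x : ZMod N, (f x : ℂ) * Complex.exp (-2 * π * Complex.I * (k.val : ℂ) * (x.val : ℂ) / (N : ℂ))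

theorem dft_vanishes_on_unit_multiples (N : ℕ) [NeZero N] (f : ZMod N → ℚ)
    (k : ZMod N) (h : dft N f k = 0) (u : (ZMod N)ˣ) :
    dft N f ((u : ZMod N) * k) = 0 := by
  have hN : N ≠ 0 := NeZero.ne N
  have hNpos : 0 < N := Nat.pos_of_ne_zero hN
  set ζ : ℂ := Complex.exp (-2 * π * Complex.I / N) with hζdef
  have hζ : IsPrimitiveRoot ζ N := by
    have h1 := Complex.isPrimitiveRoot_exp N hN
    have h2 : ζ = (Complex.exp (2 * π * Complex.I / N))⁻¹ := by
      rw [← Complex.exp_neg, hζdef]; congr 1; ring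
    rw [h2]; exact h1.inv
  -- rewrite the dft as evaluation of powers of ζ
  have hexp : ∀ (m : ZMod N) (x : ZMod N),
      Complex.exp (-2 * π * Complex.I * (m.val : ℂ) * (x.val : ℂ) / (N : ℂ))
        = ζ ^ (m.val * x.val) := by
    intro m x
    rw [hζdef, ← Complex.exp_nat_mul]
    congr 1
    push_cast
    ring
  -- the polynomial with rational coefficients
  set P : Polynomial ℚ := ∑ x : ZMod N, Polynomial.C (f x) * Polynomial.X ^ (k.val * x.val)
    with hPdef
  have hP : ∀ z : ℂ, Polynomial.aeval z P = ∑ x : ZMod N, (f x : ℂ) * z ^ (k.val * x.val) := by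
    intro z
    simp [hPdef, map_sum]
  have hPζ : Polynomial.aeval ζ P = 0 := by
    rw [hP]
    rw [dft] at h
    rw [← h]
    exact Finset.sum_congr rfl fun x _ => by rw [hexp]
  -- minpoly divides P
  have hint : IsIntegral ℚ ζ := (hζ.isIntegral hNpos).tower_top
  have hdvd : minpoly ℚ ζ ∣ P := minpoly.dvd ℚ ζ hPζ
  -- the conjugate root
  set ζ' : ℂ := ζ ^ (u : ZMod N).val with hζ'def
  have hζ' : IsPrimitiveRoot ζ' N := hζ.pow_of_coprime _ (ZMod.val_coe_unit_coprime u)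
  have hmin : Polynomial.cyclotomic N ℚ = minpoly ℚ ζ :=
    Polynomial.cyclotomic_eq_minpoly_rat hζ hNpos
  have hroot : Polynomial.aeval ζ' (minpoly ℚ ζ) = 0 := by
    rw [← hmin]
    have := hζ'.isRoot_cyclotomic hNpos
    rw [Polynomial.IsRoot, ← Polynomial.map_cyclotomic N (algebraMap ℚ ℂ)] at this
    rwa [Polynomial.aeval_def, Polynomial.eval₂_eq_eval_map]
  have hPζ' : Polynomial.aeval ζ' P = 0 := by
    obtain ⟨q, hq⟩ := hdvd
    rw [hq, map_mul, hroot, zero_mul]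
  -- now conclude
  rw [dft]
  rw [hP] at hPζ'
  rw [← hPζ']
  refine Finset.sum_congr rfl fun x _ => ?_
  rw [hexp]
  congr 1
  rw [hζ'def, ← pow_mul]
  have hpow : ∀ a b : ℕ, a ≡ b [MOD N] → ζ ^ a = ζ ^ b := by
    intro a b hab
    rw [← Nat.div_add_mod a N, ← Nat.div_add_mod b N, pow_add, pow_add, pow_mul, pow_mul,
      hζ.pow_eq_one, one_pow, one_pow, hab]
  refine hpow _ _ ?_
  calc ((u : ZMod N) * k).val * x.val
      ≡ ((u : ZMod N).val * k.val) * x.val [MOD N] :=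
        Nat.ModEq.mul_right _ (by rw [ZMod.val_mul]; exact (Nat.mod_modEq _ _))
    _ = (u : ZMod N).val * (k.val * x.val) := by ring
end

section
/- The functions f = [13, 11, -2, -13, -11, 2] and g = [14, 7, -7, -14, -7, 7] on ZMod 6 (indexed by 0,...,5) satisfy ρ_n(f) = ρ_n(g) for n = 1, 2, 3, 4, 5, but ρ₆(f) ≠ ρ₆(g); in particular, f is not any translate of g. -/
set_option maxRecDepth 10000

open Finset

/-- The `n`-th order autocorrelation of `h : ZMod 6 → ℚ`. -/
def rho (n : ℕ) (h : ZMod 6 → ℚ) (t : Fin (n - 1) → ZMod 6) : ℚ :=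
  ∑ x, h x * ∏ i, h (x + t i)

/-- Integer version, suitable for `decide`. -/
def rhoZ (n : ℕ) (h : ZMod 6 → ℤ) (t : Fin (n - 1) → ZMod 6) : ℤ :=
  ∑ x, h x * ∏ i, h (x + t i)

def fZ : ZMod 6 → ℤ := ![13, 11, -2, -13, -11, 2]
def gZ : ZMod 6 → ℤ := ![14, 7, -7, -14, -7, 7]

lemma rho_cast (n : ℕ) (h : ZMod 6 → ℤ) (t : Fin (n - 1) → ZMod 6) :
    rho n (fun x => (h x : ℚ)) t = (rhoZ n h t : ℚ) := by
  simp [rho, rhoZ]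

lemma rho_odd (h : ZMod 6 → ℚ) (hh : ∀ x, h (x + 3) = - h x) (n : ℕ)
    (hn : Odd n) : rho n h = 0 := by
  obtain ⟨m, hm⟩ := hn
  funext t
  simp only [Pi.zero_apply]
  have key : rho n h t = - rho n h t := by
    have reindex : rho n h t = ∑ x, h (x + 3) * ∏ i, h ((x + 3) + t i) :=
      (Fintype.sum_equiv (Equiv.addRight (3 : ZMod 6)) _ _ (fun x => rfl)).symm
    have step : ∀ x : ZMod 6, h (x + 3) * ∏ i, h ((x + 3) + t i)
        = - (h x * ∏ i, h (x + t i)) := by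
      intro x
      have h2 : ∀ i : Fin (n - 1), h ((x + 3) + t i) = (-1) * h (x + t i) := by
        intro i
        rw [show (x + 3) + t i = (x + t i) + 3 by ring, hh]; ring
      rw [hh x, Finset.prod_congr rfl (fun i _ => h2 i), Finset.prod_mul_distrib,
        Finset.prod_const, Finset.card_univ, Fintype.card_fin]
      have hp : ((-1 : ℚ)) ^ (n - 1) = 1 := by
        rw [show n - 1 = 2 * m by omega, pow_mul]; norm_num
      rw [hp]; ring
    calc rho n h t = ∑ x, h (x + 3) * ∏ i, h ((x + 3) + t i) := reindex
      _ = ∑ x, - (h x * ∏ i, h (x + t i)) := Finset.sum_congr rfl (fun x _ => step x)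
      _ = - ∑ x, h x * ∏ i, h (x + t i) := by rw [Finset.sum_neg_distrib]
      _ = - rho n h t := rfl
  linarith

theorem concrete_example_on_Z6 (f g : ZMod 6 → ℚ)
    (hf : f = ![13, 11, -2, -13, -11, 2]) (hg : g = ![14, 7, -7, -14, -7, 7]) :
    (∀ n : ℕ, 1 ≤ n → n ≤ 5 → rho n f = rho n g) ∧
    rho 6 f ≠ rho 6 g ∧
    ∀ a : ZMod 6, f ≠ fun x => g (x + a) := by
  have hfc : f = fun x => (fZ x : ℚ) := by
    rw [hf]; funext x; fin_cases x <;> norm_num [fZ, Matrix.cons_val_succ]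
  have hgc : g = fun x => (gZ x : ℚ) := by
    rw [hg]; funext x; fin_cases x <;> norm_num [gZ, Matrix.cons_val_succ]
  have hfz : ∀ x, fZ (x + 3) = - fZ x := by decide
  have hgz : ∀ x, gZ (x + 3) = - gZ x := by decide
  have hfodd : ∀ x, f (x + 3) = - f x := by
    intro x; rw [hfc]; push_cast [hfz x]; ring
  have hgodd : ∀ x, g (x + 3) = - g x := by
    intro x; rw [hgc]; push_cast [hgz x]; ring
  have hcast : ∀ n, rho n f = fun t => (rhoZ n fZ t : ℚ) := by
    intro n; funext t; rw [hfc]; exact rho_cast n fZ t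
  have hcastg : ∀ n, rho n g = fun t => (rhoZ n gZ t : ℚ) := by
    intro n; funext t; rw [hgc]; exact rho_cast n gZ t
  refine ⟨?_, ?_, ?_⟩
  · intro n h1 h5
    interval_cases n
    · rw [rho_odd f hfodd 1 ⟨0, rfl⟩, rho_odd g hgodd 1 ⟨0, rfl⟩]
    · rw [hcast, hcastg]
      have : rhoZ 2 fZ = rhoZ 2 gZ := by decide
      rw [this]
    · rw [rho_odd f hfodd 3 ⟨1, rfl⟩, rho_odd g hgodd 3 ⟨1, rfl⟩]
    · rw [hcast, hcastg]
      have : rhoZ 4 fZ = rhoZ 4 gZ := by decide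
      rw [this]
    · rw [rho_odd f hfodd 5 ⟨2, rfl⟩, rho_odd g hgodd 5 ⟨2, rfl⟩]
  · intro h
    have h0 := congrFun h (fun _ => 0)
    rw [hcast, hcastg] at h0
    have h0' : ((rhoZ 6 fZ fun _ => 0 : ℤ) : ℚ) = ((rhoZ 6 gZ fun _ => 0 : ℤ) : ℚ) := h0
    have : rhoZ 6 fZ (fun _ => 0) ≠ rhoZ 6 gZ (fun _ => 0) := by decide
    exact this (by exact_mod_cast h0')
  · have htrans : ∀ a : ZMod 6, ∃ x, fZ x ≠ gZ (x + a) := by decide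
    intro a h
    obtain ⟨x, hx⟩ := htrans a
    have hx2 := congrFun h x
    rw [hfc, hgc] at hx2
    have hx3 : ((fZ x : ℤ) : ℚ) = ((gZ (x + a) : ℤ) : ℚ) := hx2
    exact hx (by exact_mod_cast hx3)
end
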